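/- arXiv:math/0310165 — 5 statements merged into one kernel-verified Lean document; each statement's English description precedes it below -/
import Mathlib

section
/- Every graph that embeds isometrically into a hypercube (with scale 1) satisfies all 5-gonal inequalities: if φ : V → {0,1}^N satisfies |φ(u) Δ φ(v)| = d(u,v) for all u,v, then for every b ∈ ℤ^V with Σ b_v = 1, Σ_{u<v} b_u b_v d(u,v) ≤ 0. -/
open Finset

/-- Every graph embedding isometrically (scale 1) into a hypercube satisfies all
5-gonal (indeed hypermetric) inequalities: if `φ` maps vertices to binary
vectors with Hamming distance equal to the graph distance, then for every
integer vector `b` with `Σ b = 1` one has `Σ_{u<v} b_u b_v d(u,v) ≤ 0`. -/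
theorem stmt_10 (n N : ℕ) (G : SimpleGraph (Fin n)) (φ : Fin n → Fin N → Bool)
    (hφ : ∀ u v : Fin n,
      (Finset.univ.filter fun k => φ u k ≠ φ v k).card = G.dist u v)
    (b : Fin n → ℤ) (hb : ∑ v, b v = 1) :
    ∑ u : Fin n, ∑ v : Fin n,
        (if u < v then b u * b v * (G.dist u v : ℤ) else 0) ≤ 0 := by
  classical
  have hd : ∀ u v : Fin n, (G.dist u v : ℤ)
      = ∑ k : Fin N, (if φ u k ≠ φ v k then (1:ℤ) else 0) := by
    intro u v
    rw [← hφ u v, Finset.card_filter]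
    push_cast [apply_ite (Nat.cast : ℕ → ℤ)]
    rfl
  have step1 : ∑ u : Fin n, ∑ v : Fin n,
        (if u < v then b u * b v * (G.dist u v : ℤ) else 0)
      = ∑ k : Fin N, ∑ u : Fin n, ∑ v : Fin n,
        (if u < v then b u * b v * (if φ u k ≠ φ v k then (1:ℤ) else 0) else 0) := by
    calc ∑ u : Fin n, ∑ v : Fin n,
          (if u < v then b u * b v * (G.dist u v : ℤ) else 0)
        = ∑ u : Fin n, ∑ v : Fin n, ∑ k : Fin N,
          (if u < v then b u * b v * (if φ u k ≠ φ v k then (1:ℤ) else 0) else 0) := by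
          apply Finset.sum_congr rfl; intro u _
          apply Finset.sum_congr rfl; intro v _
          by_cases h : u < v
          · simp only [h, if_true, hd, Finset.mul_sum]
          · simp [h]
      _ = ∑ u : Fin n, ∑ k : Fin N, ∑ v : Fin n,
          (if u < v then b u * b v * (if φ u k ≠ φ v k then (1:ℤ) else 0) else 0) := by
          exact Finset.sum_congr rfl fun u _ => Finset.sum_comm
      _ = ∑ k : Fin N, ∑ u : Fin n, ∑ v : Fin n,
          (if u < v then b u * b v * (if φ u k ≠ φ v k then (1:ℤ) else 0) else 0) :=
          Finset.sum_comm
  rw [step1]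
  apply Finset.sum_nonpos
  intro k _
  set i : Fin n → ℤ := fun u => if φ u k then 1 else 0 with hi
  set s : ℤ := ∑ u, b u * i u with hs
  set g : Fin n → Fin n → ℤ := fun u v => b u * b v * (if φ u k ≠ φ v k then (1:ℤ) else 0)
    with hg
  have hgsymm : ∀ u v, g u v = g v u := by
    intro u v; simp only [hg, ne_comm]; ring_nf
  have hgdiag : ∀ u, g u u = 0 := by intro u; simp [hg]
  have hge : ∀ u v, g u v = (b u * i u) * b v + b u * (b v * i v)
      - 2 * ((b u * i u) * (b v * i v)) := by
    intro u v
    simp only [hg, hi]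
    cases h1 : φ u k <;> cases h2 : φ v k <;> simp <;> ring
  have hfull : ∑ u : Fin n, ∑ v : Fin n, g u v = 2 * (s * (1 - s)) := by
    calc ∑ u : Fin n, ∑ v : Fin n, g u v
        = ∑ u : Fin n, ((b u * i u) * (∑ v, b v) + b u * s
            - 2 * ((b u * i u) * s)) := by
          apply Finset.sum_congr rfl; intro u _
          simp only [hge, Finset.sum_add_distrib, Finset.sum_sub_distrib,
            ← Finset.mul_sum, hs]
      _ = s * (∑ v, b v) + (∑ u, b u) * s - 2 * (s * s) := by
          simp only [Finset.sum_add_distrib, Finset.sum_sub_distrib,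
            ← Finset.sum_mul, ← Finset.mul_sum, hs]
      _ = 2 * (s * (1 - s)) := by rw [hb]; ring
  have hsplit : ∀ u v : Fin n, g u v
      = (if u < v then g u v else 0) + (if v < u then g u v else 0) := by
    intro u v
    rcases lt_trichotomy u v with h | h | h
    · simp [h, not_lt_of_gt h]
    · subst h; simp [hgdiag]
    · simp [h, not_lt_of_gt h]
  have htwice : 2 * (∑ u : Fin n, ∑ v : Fin n, (if u < v then g u v else 0))
      = ∑ u : Fin n, ∑ v : Fin n, g u v := by
    conv_rhs => rw [show (∑ u : Fin n, ∑ v : Fin n, g u v)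
      = ∑ u : Fin n, ∑ v : Fin n, ((if u < v then g u v else 0)
        + (if v < u then g u v else 0)) from
      Finset.sum_congr rfl fun u _ => Finset.sum_congr rfl fun v _ => hsplit u v]
    simp only [Finset.sum_add_distrib]
    have : ∑ u : Fin n, ∑ v : Fin n, (if v < u then g u v else 0)
        = ∑ u : Fin n, ∑ v : Fin n, (if u < v then g u v else 0) := by
      rw [Finset.sum_comm]
      exact Finset.sum_congr rfl fun u _ => Finset.sum_congr rfl fun v _ => by
        rw [hgsymm]
    rw [this]; ring
  have hsle : s * (1 - s) ≤ 0 := by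
    rcases le_or_gt s 0 with h | h
    · exact mul_nonpos_of_nonpos_of_nonneg h (by linarith)
    · exact mul_nonpos_of_nonneg_of_nonpos (by linarith) (by omega)
  have := htwice.trans hfull
  -- goal: ∑ u ∑ v (if u < v then b u * b v * ... else 0) ≤ 0
  show ∑ u : Fin n, ∑ v : Fin n, (if u < v then g u v else 0) ≤ 0
  linarith
end

section
/- A graph containing K_5 − K_3 as an isometric subgraph is not embeddable isometrically (at any scale λ ≥ 1) into a hypercube. -/
open Finset

/-- A graph containing `K_5 − K_3` as an isometric subgraph is not embeddable
isometrically at any scale `λ ≥ 1` into a hypercube. -/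
theorem stmt_11 {V : Type} [Fintype V] [DecidableEq V] (G : SimpleGraph V)
    (f : Fin 5 → V) (hf : Function.Injective f)
    (hiso : ∀ p q : Fin 5,
      (G.dist (f p) (f q) : ℤ) =
        (if p = q then 0 else if p.val < 3 ∧ q.val < 3 then 2 else 1)) :
    ¬ ∃ (lam N : ℕ), 1 ≤ lam ∧ ∃ φ : V → Fin N → Bool,
        ∀ u v : V,
          (Finset.univ.filter fun k => φ u k ≠ φ v k).card = lam * G.dist u v := by
  rintro ⟨lam, N, hlam, φ, hφ⟩
  set g : Fin 5 → Fin N → Bool := fun i => φ (f i) with hg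
  have key : ∀ p q : Fin 5,
      (∑ k : Fin N, (if g p k ≠ g q k then (1 : ℤ) else 0)) =
        (lam : ℤ) * (if p = q then 0 else if p.val < 3 ∧ q.val < 3 then 2 else 1) := by
    intro p q
    have h1 := hφ (f p) (f q)
    have h2 := hiso p q
    have h3 : ((Finset.univ.filter fun k => φ (f p) k ≠ φ (f q) k).card : ℤ)
        = (lam : ℤ) * (G.dist (f p) (f q) : ℤ) := by exact_mod_cast h1
    rw [h2] at h3
    rw [Finset.card_filter] at h3
    push_cast at h3
    simpa [hg] using h3
  have h01 : (∑ k : Fin N, (if g 0 k ≠ g 1 k then (1:ℤ) else 0)) = (lam:ℤ)*2 := by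
    rw [key 0 1, if_neg (by decide), if_pos (by decide)]
  have h02 : (∑ k : Fin N, (if g 0 k ≠ g 2 k then (1:ℤ) else 0)) = (lam:ℤ)*2 := by
    rw [key 0 2, if_neg (by decide), if_pos (by decide)]
  have h12 : (∑ k : Fin N, (if g 1 k ≠ g 2 k then (1:ℤ) else 0)) = (lam:ℤ)*2 := by
    rw [key 1 2, if_neg (by decide), if_pos (by decide)]
  have h34 : (∑ k : Fin N, (if g 3 k ≠ g 4 k then (1:ℤ) else 0)) = (lam:ℤ) := by
    rw [key 3 4, if_neg (by decide), if_neg (by decide), mul_one]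
  have h03 : (∑ k : Fin N, (if g 0 k ≠ g 3 k then (1:ℤ) else 0)) = (lam:ℤ) := by
    rw [key 0 3, if_neg (by decide), if_neg (by decide), mul_one]
  have h04 : (∑ k : Fin N, (if g 0 k ≠ g 4 k then (1:ℤ) else 0)) = (lam:ℤ) := by
    rw [key 0 4, if_neg (by decide), if_neg (by decide), mul_one]
  have h13 : (∑ k : Fin N, (if g 1 k ≠ g 3 k then (1:ℤ) else 0)) = (lam:ℤ) := by
    rw [key 1 3, if_neg (by decide), if_neg (by decide), mul_one]
  have h14 : (∑ k : Fin N, (if g 1 k ≠ g 4 k then (1:ℤ) else 0)) = (lam:ℤ) := by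
    rw [key 1 4, if_neg (by decide), if_neg (by decide), mul_one]
  have h23 : (∑ k : Fin N, (if g 2 k ≠ g 3 k then (1:ℤ) else 0)) = (lam:ℤ) := by
    rw [key 2 3, if_neg (by decide), if_neg (by decide), mul_one]
  have h24 : (∑ k : Fin N, (if g 2 k ≠ g 4 k then (1:ℤ) else 0)) = (lam:ℤ) := by
    rw [key 2 4, if_neg (by decide), if_neg (by decide), mul_one]
  have pt : ∀ k : Fin N,
      ((if g 0 k ≠ g 1 k then (1:ℤ) else 0) + (if g 0 k ≠ g 2 k then (1:ℤ) else 0)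
        + (if g 1 k ≠ g 2 k then (1:ℤ) else 0) + (if g 3 k ≠ g 4 k then (1:ℤ) else 0))
       - ((if g 0 k ≠ g 3 k then (1:ℤ) else 0) + (if g 0 k ≠ g 4 k then (1:ℤ) else 0)
        + (if g 1 k ≠ g 3 k then (1:ℤ) else 0) + (if g 1 k ≠ g 4 k then (1:ℤ) else 0)
        + (if g 2 k ≠ g 3 k then (1:ℤ) else 0) + (if g 2 k ≠ g 4 k then (1:ℤ) else 0)) ≤ 0 := by
    intro k
    cases h0 : g 0 k <;> cases h1 : g 1 k <;> cases h2 : g 2 k <;> cases h3 : g 3 k <;>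
      cases h4 : g 4 k <;> norm_num
  have hsum := Finset.sum_nonpos (s := (Finset.univ : Finset (Fin N))) (fun k _ => pt k)
  rw [show (∑ k : Fin N,
      (((if g 0 k ≠ g 1 k then (1:ℤ) else 0) + (if g 0 k ≠ g 2 k then (1:ℤ) else 0)
        + (if g 1 k ≠ g 2 k then (1:ℤ) else 0) + (if g 3 k ≠ g 4 k then (1:ℤ) else 0))
       - ((if g 0 k ≠ g 3 k then (1:ℤ) else 0) + (if g 0 k ≠ g 4 k then (1:ℤ) else 0)
        + (if g 1 k ≠ g 3 k then (1:ℤ) else 0) + (if g 1 k ≠ g 4 k then (1:ℤ) else 0)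
        + (if g 2 k ≠ g 3 k then (1:ℤ) else 0) + (if g 2 k ≠ g 4 k then (1:ℤ) else 0))))
      = (∑ k : Fin N, (if g 0 k ≠ g 1 k then (1:ℤ) else 0))
        + (∑ k : Fin N, (if g 0 k ≠ g 2 k then (1:ℤ) else 0))
        + (∑ k : Fin N, (if g 1 k ≠ g 2 k then (1:ℤ) else 0))
        + (∑ k : Fin N, (if g 3 k ≠ g 4 k then (1:ℤ) else 0))
        - ((∑ k : Fin N, (if g 0 k ≠ g 3 k then (1:ℤ) else 0))
        + (∑ k : Fin N, (if g 0 k ≠ g 4 k then (1:ℤ) else 0))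
        + (∑ k : Fin N, (if g 1 k ≠ g 3 k then (1:ℤ) else 0))
        + (∑ k : Fin N, (if g 1 k ≠ g 4 k then (1:ℤ) else 0))
        + (∑ k : Fin N, (if g 2 k ≠ g 3 k then (1:ℤ) else 0))
        + (∑ k : Fin N, (if g 2 k ≠ g 4 k then (1:ℤ) else 0)))
    from by rw [← Finset.sum_add_distrib, ← Finset.sum_add_distrib, ← Finset.sum_add_distrib,
      ← Finset.sum_add_distrib, ← Finset.sum_add_distrib, ← Finset.sum_add_distrib,
      ← Finset.sum_add_distrib, ← Finset.sum_add_distrib, ← Finset.sum_sub_distrib]] at hsum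
  rw [h01, h02, h12, h34, h03, h04, h13, h14, h23, h24] at hsum
  have : (1 : ℤ) ≤ lam := by exact_mod_cast hlam
  linarith
end

section
/- The skeleton of the simplicial complex K(P), for P a partition of {1,...,n+1} into t parts of which h are singletons, is the graph K_{n+1+t} − hK_2: the complete graph on the n+1+t vertices {1,...,n+1,P_1,...,P_t} minus the h edges {i, P_j} for each singleton part P_j = {i}. -/
open Finset

/-- Vertices of `K(P)`: the elements `1, …, n+1` (`Sum.inl`) together with the
parts `P_1, …, P_t` (`Sum.inr`). -/
abbrev KPVertex (n : ℕ) (P : Finpartition (Finset.univ : Finset (Fin (n + 1)))) :=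
  Fin (n + 1) ⊕ {p // p ∈ P.parts}

/-- Membership of a vertex in the facet of `K(P)` determined by the priming
function `f` (each part containing at most one primed element): unprimed
vertex `i` belongs iff `f i = false`; part vertex `P_j` belongs iff some element
of `P_j` is primed. -/
def inFacet (n : ℕ) (P : Finpartition (Finset.univ : Finset (Fin (n + 1))))
    (f : Fin (n + 1) → Bool) : KPVertex n P → Prop
  | Sum.inl i => f i = false
  | Sum.inr p => ∃ i ∈ p.val, f i = true

theorem helper_pick (n : ℕ) (P : Finpartition (Finset.univ : Finset (Fin (n + 1))))
    (i : Fin (n + 1)) (p : Finset (Fin (n + 1))) (hp : p ∈ P.parts) (hne : p ≠ {i}) :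
    ∃ j ∈ p, j ≠ i := by
  by_contra h
  push_neg at h
  apply hne
  have hsub : p ⊆ {i} := fun x hx => Finset.mem_singleton.2 (h x hx)
  rcases Finset.subset_singleton_iff.1 hsub with h0 | h1
  · exact absurd h0 (P.nonempty_of_mem_parts hp).ne_empty
  · exact h1

/-- The skeleton of `K(P)` is `K_{n+1+t} − hK_2`: two distinct vertices of
`K(P)` lie in a common facet iff they are not a pair `{i, P_j}` with
`P_j = {i}` a singleton part. -/
theorem stmt_13 (n : ℕ) (P : Finpartition (Finset.univ : Finset (Fin (n + 1))))
    (u v : KPVertex n P) :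
    (u ≠ v ∧ ∃ f : Fin (n + 1) → Bool,
        (∀ p ∈ P.parts, (p.filter fun i => f i).card ≤ 1) ∧
        inFacet n P f u ∧ inFacet n P f v) ↔
      (u ≠ v ∧ ¬ ∃ (i : Fin (n + 1)) (p : Finset (Fin (n + 1))) (hp : p ∈ P.parts),
          p = {i} ∧
          ((u = Sum.inl i ∧ v = Sum.inr ⟨p, hp⟩) ∨
            (v = Sum.inl i ∧ u = Sum.inr ⟨p, hp⟩))) := by
  constructor
  · rintro ⟨huv, f, hf, hu, hv⟩
    refine ⟨huv, ?_⟩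
    rintro ⟨i, p, hp, hpi, (⟨rfl, rfl⟩ | ⟨rfl, rfl⟩)⟩
    · simp only [inFacet, hpi, Finset.mem_singleton] at hu hv
      obtain ⟨j, rfl, hj⟩ := hv
      simp [hu] at hj
    · simp only [inFacet, hpi, Finset.mem_singleton] at hu hv
      obtain ⟨j, rfl, hj⟩ := hu
      simp [hv] at hj
  · rintro ⟨huv, hno⟩
    refine ⟨huv, ?_⟩
    match u, v with
    | Sum.inl i, Sum.inl j =>
      exact ⟨fun _ => false, by simp, rfl, rfl⟩
    | Sum.inl i, Sum.inr p =>
      have hne : p.val ≠ {i} := by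
        intro h
        exact hno ⟨i, p.val, p.2, h, Or.inl ⟨rfl, rfl⟩⟩
      obtain ⟨j, hj, hji⟩ := helper_pick n P i p.val p.2 hne
      refine ⟨fun x => decide (x = j), ?_, ?_, ⟨j, hj, by simp⟩⟩
      · intro q hq
        rw [Finset.card_le_one]
        intro a ha b hb
        simp only [Finset.mem_filter, decide_eq_true_eq] at ha hb
        exact ha.2.trans hb.2.symm
      · show decide (i = j) = false
        simp [Ne.symm hji]
    | Sum.inr p, Sum.inl i =>
      have hne : p.val ≠ {i} := by
        intro h
        exact hno ⟨i, p.val, p.2, h, Or.inr ⟨rfl, rfl⟩⟩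
      obtain ⟨j, hj, hji⟩ := helper_pick n P i p.val p.2 hne
      refine ⟨fun x => decide (x = j), ?_, ⟨j, hj, by simp⟩, ?_⟩
      · intro q hq
        rw [Finset.card_le_one]
        intro a ha b hb
        simp only [Finset.mem_filter, decide_eq_true_eq] at ha hb
        exact ha.2.trans hb.2.symm
      · show decide (i = j) = false
        simp [Ne.symm hji]
    | Sum.inr p, Sum.inr q =>
      have hpq : p ≠ q := fun h => huv (by rw [h])
      have hval : p.val ≠ q.val := fun h => hpq (Subtype.ext h)
      obtain ⟨a, ha⟩ := P.nonempty_of_mem_parts p.2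
      obtain ⟨b, hb⟩ := P.nonempty_of_mem_parts q.2
      refine ⟨fun x => decide (x = a ∨ x = b), ?_, ⟨a, ha, by simp⟩, ⟨b, hb, by simp⟩⟩
      intro r hr
      rw [Finset.card_le_one]
      intro x hx y hy
      simp only [Finset.mem_filter, decide_eq_true_eq] at hx hy
      rcases hx.2 with rfl | rfl <;> rcases hy.2 with rfl | rfl
      · rfl
      · exact absurd ((P.eq_of_mem_parts hr p.2 hx.1 ha).symm.trans
          (P.eq_of_mem_parts hr q.2 hy.1 hb)) hval
      · exact absurd ((P.eq_of_mem_parts hr p.2 hy.1 ha).symm.trans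
          (P.eq_of_mem_parts hr q.2 hx.1 hb)) hval
      · rfl
end

section
/- For every n ≥ 2 there exist λ ≥ 1, N and a map φ : V(K_{2n} − nK_2) → {0,1}^N such that the Hamming distance satisfies |φ(u) Δ φ(v)| = λ·d(u,v) for all vertices u,v of the cocktail-party graph K_{2n} − nK_2, where d is its path metric: d(i,i') = 2 for matched pairs and d = 1 otherwise. -/
open Finset

private lemma card_filter_comp_equiv {α β : Type*} [Fintype α] [Fintype β]
    (e : α ≃ β) (Q : β → Prop) [DecidablePred Q] :
    (univ.filter fun a => Q (e a)).card = (univ.filter Q).card := by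
  apply Finset.card_bij (fun a _ => e a)
  · intro a ha; simpa using (mem_filter.mp ha).2
  · intro a _ b _ h; exact e.injective h
  · intro b hb; exact ⟨e.symm b, by simpa using (mem_filter.mp hb).2, by simp⟩

private lemma card_xi_eq_xj (n : ℕ) (i j : Fin n) (hij : i ≠ j) :
    (univ.filter fun x : Fin n → Bool => x i = x j).card =
      (univ.filter fun x : Fin n → Bool => ¬ (x i = x j)).card := by
  classical
  apply Finset.card_bij (fun x _ => Function.update x i (!x i))
  · intro x hx
    have hx' := (mem_filter.mp hx).2
    simp [Function.update_apply, hij, Ne.symm hij, hx']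
  · intro x _ y _ h
    funext k
    by_cases hk : k = i
    · subst hk
      have := congrFun h k
      simpa using this
    · have := congrFun h k
      simpa [Function.update_apply, hk] using this
  · intro y hy
    have hy' := (mem_filter.mp hy).2
    refine ⟨Function.update y i (!y i), ?_, ?_⟩
    · simp only [mem_filter, mem_univ, true_and]
      simp [Function.update_apply, hij, Ne.symm hij]
      cases h1 : y i <;> cases h2 : y j <;> simp_all
    · funext k
      by_cases hk : k = i
      · subst hk; simp
      · simp [Function.update_apply, hk]

private lemma card_ne_half (n : ℕ) (i j : Fin n) (hij : i ≠ j) :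
    (univ.filter fun x : Fin n → Bool => ¬ (x i = x j)).card = 2 ^ (n - 1) := by
  classical
  have hsum := Finset.card_filter_add_card_filter_not
    (s := (univ : Finset (Fin n → Bool))) (p := fun x => x i = x j)
  have hcard : (univ : Finset (Fin n → Bool)).card = 2 ^ n := by
    simp [Finset.card_univ]
  have heq := card_xi_eq_xj n i j hij
  have hn1 : 1 ≤ n := Nat.one_le_iff_ne_zero.mpr (by rintro rfl; exact i.elim0)
  have h2n : 2 ^ n = 2 ^ (n - 1) * 2 := by
    rw [← pow_succ, Nat.sub_add_cancel hn1]
  rw [heq, hcard, h2n] at hsum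
  set T := (univ.filter fun x : Fin n → Bool => ¬ (x i = x j)).card with hT
  linarith

private lemma card_eq_half (n : ℕ) (i j : Fin n) (hij : i ≠ j) :
    (univ.filter fun x : Fin n → Bool => x i = x j).card = 2 ^ (n - 1) := by
  exact (card_xi_eq_xj n i j hij).trans (card_ne_half n i j hij)

/-- The cocktail-party graph `K_{2n} − nK_2` (vertices `(i,b)`, path-metric `2`
between matched pairs `(i,0),(i,1)` and `1` between other distinct pairs)
embeds isometrically into a hypercube at some scale `λ ≥ 1`: there are
`λ, N` and `φ` with Hamming distance `= λ ·` graph distance. -/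
theorem stmt_14 (n : ℕ) (hn : 2 ≤ n) :
    ∃ (lam N : ℕ), 1 ≤ lam ∧ ∃ φ : Fin n × Fin 2 → Fin N → Bool,
      ∀ u v : Fin n × Fin 2,
        ((Finset.univ.filter fun k => φ u k ≠ φ v k).card : ℤ) =
          lam * (if u = v then 0 else if u.1 = v.1 then 2 else 1) := by
  classical
  set e := (Fintype.equivFin (Fin n → Bool)) with he
  refine ⟨2 ^ (n - 1), Fintype.card (Fin n → Bool), Nat.one_le_two_pow, ?_⟩
  refine ⟨fun p k => xor (decide (p.2 = 1)) (e.symm k p.1), ?_⟩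
  rintro ⟨i, a⟩ ⟨j, c⟩
  simp only [ne_eq]
  rw [card_filter_comp_equiv e.symm
    (fun x : Fin n → Bool => ¬ (xor (decide (a = 1)) (x i) = xor (decide (c = 1)) (x j)))]
  have hpow : ((2 : ℤ) ^ n) = 2 ^ (n - 1) * 2 := by
    rw [← pow_succ, Nat.sub_add_cancel (by omega : 1 ≤ n)]
  by_cases hij : i = j
  · subst hij
    by_cases hac : a = c
    · subst hac
      simp [Prod.ext_iff]
    · have hdec : decide (a = 1) ≠ decide (c = 1) := by
        fin_cases a <;> fin_cases c <;> simp_all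
      have hfull : (univ.filter fun x : Fin n → Bool =>
          ¬ (xor (decide (a = 1)) (x i) = xor (decide (c = 1)) (x i))) = univ := by
        ext x
        simp only [mem_filter, mem_univ, true_and, iff_true]
        revert hdec
        cases decide (a = 1) <;> cases decide (c = 1) <;> cases x i <;> simp
      rw [hfull]
      have hu : (univ : Finset (Fin n → Bool)).card = 2 ^ n := by
        simp [Finset.card_univ]
      rw [hu]
      simp only [Prod.mk.injEq, hac, and_false, if_false, if_pos rfl]
      push_cast
      rw [hpow]
  · have hne : ((i, a) : Fin n × Fin 2) ≠ (j, c) := by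
      simp [Prod.ext_iff, hij]
    simp only [if_neg hne, if_neg hij, mul_one]
    by_cases hac : a = c
    · subst hac
      have : (univ.filter fun x : Fin n → Bool =>
          ¬ (xor (decide (a = 1)) (x i) = xor (decide (a = 1)) (x j))) =
          (univ.filter fun x : Fin n → Bool => ¬ (x i = x j)) := by
        apply filter_congr
        intro x _
        cases decide (a = 1) <;> cases x i <;> cases x j <;> simp
      rw [this, card_ne_half n i j hij]
    · have hdec : decide (a = 1) ≠ decide (c = 1) := by
        fin_cases a <;> fin_cases c <;> simp_all
      have : (univ.filter fun x : Fin n → Bool =>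
          ¬ (xor (decide (a = 1)) (x i) = xor (decide (c = 1)) (x j))) =
          (univ.filter fun x : Fin n → Bool => x i = x j) := by
        apply filter_congr
        intro x _
        revert hdec
        cases decide (a = 1) <;> cases decide (c = 1) <;> cases x i <;> cases x j <;> simp
      rw [this, card_eq_half n i j hij]
end

section
/- Let K_7 − C_5 be the complete graph on 7 vertices minus the 5 edges of a cycle on 5 of them, with path metric d(i,j) = 2 if {i,j} is an edge of the removed C_5 and d(i,j) = 1 otherwise. Then K_7 − C_5 satisfies all 5-gonal inequalities, i.e., for every b ∈ ℤ^7 which is a permutation of (1,1,1,−1,−1,0,0), Σ_{i<j} b_i b_j d(i,j) ≤ 0. -/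
open Finset

/-- The path-metric of `K_7 − C_5`: the cycle `C_5 = (0,1,2,3,4)` is removed, so
`d = 2` on the removed cycle edges and `d = 1` on all other distinct pairs. -/
def distK7C5 (i j : Fin 7) : ℤ :=
  if i = j then 0
  else if i.val < 5 ∧ j.val < 5 ∧
      ((i.val + 1) % 5 = j.val ∨ (j.val + 1) % 5 = i.val) then 2
  else 1

def coefK7 (i j : Fin 7) : ℤ := if i < j then distK7C5 i j else 0

lemma key (a b c d e f g : ℤ)
    (ha : a = -1 ∨ a = 0 ∨ a = 1) (hb : b = -1 ∨ b = 0 ∨ b = 1)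
    (hc : c = -1 ∨ c = 0 ∨ c = 1) (hd : d = -1 ∨ d = 0 ∨ d = 1)
    (he : e = -1 ∨ e = 0 ∨ e = 1) (hf : f = -1 ∨ f = 0 ∨ f = 1)
    (hg : g = -1 ∨ g = 0 ∨ g = 1)
    (hs : a + b + c + d + e + f + g = 1)
    (hq : a*a + b*b + c*c + d*d + e*e + f*f + g*g = 5) :
    a*b + b*c + c*d + d*e + e*a ≤ 2 := by
  rcases ha with rfl|rfl|rfl <;> rcases hb with rfl|rfl|rfl <;>
    rcases hc with rfl|rfl|rfl <;> rcases hd with rfl|rfl|rfl <;>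
    rcases he with rfl|rfl|rfl <;> omega

set_option maxRecDepth 10000 in
/-- `K_7 − C_5` satisfies all 5-gonal inequalities: for every `b ∈ ℤ^7` which is
a permutation of `(1,1,1,−1,−1,0,0)`, `Σ_{i<j} b_i b_j d(i,j) ≤ 0`. -/
theorem stmt_18 :
    ∀ b : Fin 7 → ℤ,
      (∃ σ : Equiv.Perm (Fin 7), b = fun i => ![1, 1, 1, -1, -1, 0, 0] (σ i)) →
      ∑ i : Fin 7, ∑ j : Fin 7,
          (if i < j then b i * b j * distK7C5 i j else 0) ≤ 0 := by
  rintro b ⟨σ, rfl⟩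
  set b : Fin 7 → ℤ := fun i => ![1, 1, 1, -1, -1, 0, 0] (σ i) with hbdef
  have hmem : ∀ i, b i = -1 ∨ b i = 0 ∨ b i = 1 := by
    intro i
    have : ∀ j : Fin 7, (![1, 1, 1, -1, -1, 0, 0] j : ℤ) = -1 ∨
        (![1, 1, 1, -1, -1, 0, 0] j : ℤ) = 0 ∨ (![1, 1, 1, -1, -1, 0, 0] j : ℤ) = 1 := by
      decide
    exact this (σ i)
  have hs : b 0 + b 1 + b 2 + b 3 + b 4 + b 5 + b 6 = 1 := by
    have := Equiv.sum_comp σ (fun j => (![1, 1, 1, -1, -1, 0, 0] j : ℤ))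
    simpa [hbdef, Fin.sum_univ_seven] using this
  have hq : b 0*b 0 + b 1*b 1 + b 2*b 2 + b 3*b 3 + b 4*b 4 + b 5*b 5 + b 6*b 6 = 5 := by
    have := Equiv.sum_comp σ
      (fun j => (![1, 1, 1, -1, -1, 0, 0] j : ℤ) * (![1, 1, 1, -1, -1, 0, 0] j : ℤ))
    simpa [hbdef, Fin.sum_univ_seven] using this
  have hrw : ∀ i j : Fin 7,
      (if i < j then b i * b j * distK7C5 i j else 0) = b i * b j * coefK7 i j := by
    intro i j
    by_cases hij : i < j <;> simp [coefK7, hij]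
  simp only [hrw]
  simp only [Fin.sum_univ_seven]
  simp only [show coefK7 0 0 = 0 from by decide,
    show coefK7 0 1 = 2 from by decide,
    show coefK7 0 2 = 1 from by decide,
    show coefK7 0 3 = 1 from by decide,
    show coefK7 0 4 = 2 from by decide,
    show coefK7 0 5 = 1 from by decide,
    show coefK7 0 6 = 1 from by decide,
    show coefK7 1 0 = 0 from by decide,
    show coefK7 1 1 = 0 from by decide,
    show coefK7 1 2 = 2 from by decide,
    show coefK7 1 3 = 1 from by decide,
    show coefK7 1 4 = 1 from by decide,
    show coefK7 1 5 = 1 from by decide,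
    show coefK7 1 6 = 1 from by decide,
    show coefK7 2 0 = 0 from by decide,
    show coefK7 2 1 = 0 from by decide,
    show coefK7 2 2 = 0 from by decide,
    show coefK7 2 3 = 2 from by decide,
    show coefK7 2 4 = 1 from by decide,
    show coefK7 2 5 = 1 from by decide,
    show coefK7 2 6 = 1 from by decide,
    show coefK7 3 0 = 0 from by decide,
    show coefK7 3 1 = 0 from by decide,
    show coefK7 3 2 = 0 from by decide,
    show coefK7 3 3 = 0 from by decide,
    show coefK7 3 4 = 2 from by decide,
    show coefK7 3 5 = 1 from by decide,
    show coefK7 3 6 = 1 from by decide,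
    show coefK7 4 0 = 0 from by decide,
    show coefK7 4 1 = 0 from by decide,
    show coefK7 4 2 = 0 from by decide,
    show coefK7 4 3 = 0 from by decide,
    show coefK7 4 4 = 0 from by decide,
    show coefK7 4 5 = 1 from by decide,
    show coefK7 4 6 = 1 from by decide,
    show coefK7 5 0 = 0 from by decide,
    show coefK7 5 1 = 0 from by decide,
    show coefK7 5 2 = 0 from by decide,
    show coefK7 5 3 = 0 from by decide,
    show coefK7 5 4 = 0 from by decide,
    show coefK7 5 5 = 0 from by decide,
    show coefK7 5 6 = 1 from by decide,
    show coefK7 6 0 = 0 from by decide,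
    show coefK7 6 1 = 0 from by decide,
    show coefK7 6 2 = 0 from by decide,
    show coefK7 6 3 = 0 from by decide,
    show coefK7 6 4 = 0 from by decide,
    show coefK7 6 5 = 0 from by decide,
    show coefK7 6 6 = 0 from by decide]
  have hT := key (b 0) (b 1) (b 2) (b 3) (b 4) (b 5) (b 6)
    (hmem 0) (hmem 1) (hmem 2) (hmem 3) (hmem 4) (hmem 5) (hmem 6) hs hq
  nlinarith [hs, hq, hT, sq_nonneg (b 0 + b 1 + b 2 + b 3 + b 4 + b 5 + b 6)]
end
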